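/- For all t = (t₁,t₂) ∈ ℝ² and y ∈ ℝ⁴, the vectors h₁, h₂, h₃ ∈ ℝ³ are pairwise orthogonal (⟨h₁,h₂⟩ = ⟨h₁,h₃⟩ = ⟨h₂,h₃⟩ = 0), and their squared Euclidean norms are |h₁|² = |h₂|² = 16|y|² / ((1+|y|²)²(1+|t|²)²) and |h₃|² = 4|y|² / (1+|y|²)². -/
import Mathlib


open Matrix

/-- The Euclidean norm `|y|` of `y ∈ ℝ⁴` (0-indexed coordinates). -/
noncomputable def nY (y : Fin 4 → ℝ) : ℝ :=
  Real.sqrt (y 0 ^ 2 + y 1 ^ 2 + y 2 ^ 2 + y 3 ^ 2)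

/-- The vector `h₁ ∈ ℝ³`. -/
noncomputable def h₁ (t : Fin 2 → ℝ) (y : Fin 4 → ℝ) : Fin 3 → ℝ :=
  (4 * nY y / ((1 + nY y ^ 2) ^ 2 * (1 + t 0 ^ 2 + t 1 ^ 2) ^ 2)) •
    ((1 - nY y ^ 2) • ![-2 * t 0, 1 - t 0 ^ 2 + t 1 ^ 2, -2 * t 0 * t 1] +
      (2 * nY y) • ![-2 * t 1, -2 * t 0 * t 1, 1 + t 0 ^ 2 - t 1 ^ 2])

/-- The vector `h₂ ∈ ℝ³`. -/
noncomputable def h₂ (t : Fin 2 → ℝ) (y : Fin 4 → ℝ) : Fin 3 → ℝ :=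
  (4 * nY y / ((1 + nY y ^ 2) ^ 2 * (1 + t 0 ^ 2 + t 1 ^ 2) ^ 2)) •
    ((1 - nY y ^ 2) • ![-2 * t 1, -2 * t 0 * t 1, 1 + t 0 ^ 2 - t 1 ^ 2] -
      (2 * nY y) • ![-2 * t 0, 1 - t 0 ^ 2 + t 1 ^ 2, -2 * t 0 * t 1])

/-- The vector `h₃ ∈ ℝ³`. -/
noncomputable def h₃ (t : Fin 2 → ℝ) (y : Fin 4 → ℝ) : Fin 3 → ℝ :=
  (2 * nY y / ((1 + nY y ^ 2) * (1 + t 0 ^ 2 + t 1 ^ 2))) •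
    ![1 - t 0 ^ 2 - t 1 ^ 2, 2 * t 0, 2 * t 1]

set_option maxHeartbeats 1000000 in
/-- The vectors `h₁, h₂, h₃` are pairwise orthogonal, with
`|h₁|² = |h₂|² = 16|y|²/((1+|y|²)²(1+|t|²)²)` and `|h₃|² = 4|y|²/(1+|y|²)²`. -/
theorem stmt_12 (t : Fin 2 → ℝ) (y : Fin 4 → ℝ) :
    h₁ t y ⬝ᵥ h₂ t y = 0 ∧ h₁ t y ⬝ᵥ h₃ t y = 0 ∧ h₂ t y ⬝ᵥ h₃ t y = 0 ∧
    h₁ t y ⬝ᵥ h₁ t y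
      = 16 * (y 0 ^ 2 + y 1 ^ 2 + y 2 ^ 2 + y 3 ^ 2) /
          ((1 + (y 0 ^ 2 + y 1 ^ 2 + y 2 ^ 2 + y 3 ^ 2)) ^ 2 *
            (1 + t 0 ^ 2 + t 1 ^ 2) ^ 2) ∧
    h₂ t y ⬝ᵥ h₂ t y
      = 16 * (y 0 ^ 2 + y 1 ^ 2 + y 2 ^ 2 + y 3 ^ 2) /
          ((1 + (y 0 ^ 2 + y 1 ^ 2 + y 2 ^ 2 + y 3 ^ 2)) ^ 2 *
            (1 + t 0 ^ 2 + t 1 ^ 2) ^ 2) ∧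
    h₃ t y ⬝ᵥ h₃ t y
      = 4 * (y 0 ^ 2 + y 1 ^ 2 + y 2 ^ 2 + y 3 ^ 2) /
          (1 + (y 0 ^ 2 + y 1 ^ 2 + y 2 ^ 2 + y 3 ^ 2)) ^ 2 := by
  have hS : (0:ℝ) ≤ y 0 ^ 2 + y 1 ^ 2 + y 2 ^ 2 + y 3 ^ 2 := by positivity
  have hr2 : nY y ^ 2 = y 0 ^ 2 + y 1 ^ 2 + y 2 ^ 2 + y 3 ^ 2 := Real.sq_sqrt hS
  rw [← hr2]
  have h1 : (1 + nY y ^ 2) ≠ 0 := by positivity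
  have h2 : (1 + t 0 ^ 2 + t 1 ^ 2) ≠ 0 := by positivity
  simp only [h₁, h₂, h₃, dotProduct, Fin.sum_univ_three, Pi.smul_apply, Pi.add_apply,
    Pi.sub_apply, smul_eq_mul, Matrix.cons_val_zero, Matrix.cons_val_one, Matrix.head_cons,
    Matrix.cons_val_two, Matrix.tail_cons]
  refine ⟨?_, ?_, ?_, ?_, ?_, ?_⟩ <;> field_simp <;> ring
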